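/- Let m > 0, let d ≥ 1 be an integer, and let Q⁰, Q¹ : ℝ^d × ℝ^d → ℂ satisfy |Q^η(k₁,k₂)| ≤ M_Q for all k₁, k₂ ∈ ℝ^d and η ∈ {0,1}. Then there exists C > 0, depending only on m, d and M_Q, such that for all η ∈ {0,1}, every sign ι ∈ {−1,+1} and all k₁, k₂, k₃ ∈ ℝ^d, the denominator m + 2((k₁+k₂+k₃)·k₂ − ι⟨k₁+k₂+k₃⟩⟨k₂⟩) appearing in q^η_ι is nonzero and |q^η_ι(k₁,k₂,k₃)| ≤ C ⟨k₁⟩^{−1} ⟨k₂⟩^{−1} ⟨k₃⟩^{−1}. -/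

import Mathlib

noncomputable section

/-- Euclidean space `ℝ^d`. -/
abbrev Euc (d : ℕ) := EuclideanSpace ℝ (Fin d)

/-- The Japanese bracket `⟨x⟩ = √(m + |x|²)` on `ℝ^d`. -/
def jb (m : ℝ) {d : ℕ} (x : Euc d) : ℝ :=
  Real.sqrt (m + ‖x‖ ^ 2)

/-- The normalized quadratic interaction coefficient
`q^η(k₁,k₂) = Q^η(k₁,k₂) / (4 (2π)^{d/2} ⟨k₁⟩ ⟨k₂⟩)`. -/
def q2 (m : ℝ) {d : ℕ} (Q : Fin 2 → Euc d → Euc d → ℂ) (η : Fin 2) (k₁ k₂ : Euc d) : ℂ :=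
  Q η k₁ k₂ / ((4 * (2 * Real.pi) ^ ((d : ℝ) / 2) * (jb m k₁ * jb m k₂) : ℝ) : ℂ)

/-- The cubic interaction coefficient
`q^η_ι(k₁,k₂,k₃) = (4⟨k₁+k₃⟩ / (m + 2((k₁+k₂+k₃)·k₂ − ι⟨k₁+k₂+k₃⟩⟨k₂⟩))) ·
  q^{η̄}(k₁,k₃) · q^η(k₁+k₃,k₂)`. -/
def q3 (m : ℝ) {d : ℕ} (Q : Fin 2 → Euc d → Euc d → ℂ) (η : Fin 2) (ι : ℝ)
    (k₁ k₂ k₃ : Euc d) : ℂ :=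
  ((4 * jb m (k₁ + k₃) /
      (m + 2 * ((inner ℝ (k₁ + k₂ + k₃) k₂ : ℝ) - ι * (jb m (k₁ + k₂ + k₃) * jb m k₂))) : ℝ) : ℂ) *
    q2 m Q (1 - η) k₁ k₃ * q2 m Q η (k₁ + k₃) k₂

lemma jb_pos {m : ℝ} (hm : 0 < m) {d : ℕ} (x : Euc d) : 0 < jb m x :=
  Real.sqrt_pos.mpr (by positivity)

lemma jb_mul_ge {m : ℝ} (hm : 0 < m) {d : ℕ} (x y : Euc d) :
    ‖x‖ * ‖y‖ + m ≤ jb m x * jb m y := by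
  rw [jb, jb, ← Real.sqrt_mul (by positivity)]
  rw [show (m + ‖x‖ ^ 2) * (m + ‖y‖ ^ 2)
      = (‖x‖ * ‖y‖ + m) ^ 2 + m * (‖x‖ - ‖y‖) ^ 2 by ring]
  nlinarith [Real.sq_sqrt (show (0:ℝ) ≤ (‖x‖ * ‖y‖ + m) ^ 2 + m * (‖x‖ - ‖y‖) ^ 2 by positivity),
    Real.sqrt_nonneg ((‖x‖ * ‖y‖ + m) ^ 2 + m * (‖x‖ - ‖y‖) ^ 2),
    mul_nonneg (norm_nonneg x) (norm_nonneg y), sq_nonneg (‖x‖ - ‖y‖), hm.le]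


/-- If `Q⁰, Q¹` are bounded by `M_Q`, there is `C > 0` (depending only on `m, d, M_Q`) such
that for every `η`, every sign `ι ∈ {−1,+1}` and all `k₁, k₂, k₃`, the denominator
appearing in `q^η_ι` is nonzero and `|q^η_ι(k₁,k₂,k₃)| ≤ C ⟨k₁⟩⁻¹ ⟨k₂⟩⁻¹ ⟨k₃⟩⁻¹`. -/
theorem stmt4 (m : ℝ) (hm : 0 < m) (d : ℕ) (hd : 1 ≤ d)
    (MQ : ℝ) (Q : Fin 2 → Euc d → Euc d → ℂ)
    (hQ : ∀ (η : Fin 2) (k₁ k₂ : Euc d), ‖Q η k₁ k₂‖ ≤ MQ) :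
    ∃ C : ℝ, 0 < C ∧ ∀ (η : Fin 2) (ι : ℝ), (ι = -1 ∨ ι = 1) →
      ∀ k₁ k₂ k₃ : Euc d,
        m + 2 * ((inner ℝ (k₁ + k₂ + k₃) k₂ : ℝ)
            - ι * (jb m (k₁ + k₂ + k₃) * jb m k₂)) ≠ 0 ∧
        ‖q3 m Q η ι k₁ k₂ k₃‖ ≤ C * (jb m k₁)⁻¹ * (jb m k₂)⁻¹ * (jb m k₃)⁻¹ := by
  set P : ℝ := (2 * Real.pi) ^ ((d : ℝ) / 2) with hP
  have hPpos : 0 < P := Real.rpow_pos_of_pos (by positivity) _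
  have hMQ : 0 ≤ MQ := le_trans (norm_nonneg _) (hQ 0 0 0)
  refine ⟨MQ ^ 2 / (4 * m * P ^ 2) + 1, by positivity, ?_⟩
  intro η ι hι k₁ k₂ k₃
  set p := k₁ + k₂ + k₃ with hp
  set D := m + 2 * ((inner ℝ p k₂ : ℝ) - ι * (jb m p * jb m k₂)) with hD
  have hip : |(inner ℝ p k₂ : ℝ)| ≤ ‖p‖ * ‖k₂‖ := abs_real_inner_le_norm p k₂
  have hip' := abs_le.mp hip
  have hkey := jb_mul_ge hm p k₂
  have hDabs : m ≤ |D| := by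
    rcases hι with rfl | rfl
    · refine le_trans ?_ (le_abs_self D)
      rw [hD]; nlinarith
    · refine le_trans ?_ (neg_le_abs D)
      rw [hD]; nlinarith
  have hDne : D ≠ 0 := by
    intro h; rw [h, abs_zero] at hDabs; linarith
  refine ⟨hDne, ?_⟩
  have hb1 := jb_pos hm k₁
  have hb2 := jb_pos hm k₂
  have hb3 := jb_pos hm k₃
  have hb13 := jb_pos hm (k₁ + k₃)
  have hnorm : ‖q3 m Q η ι k₁ k₂ k₃‖
      = (4 * jb m (k₁ + k₃)) / |D| * (‖Q (1 - η) k₁ k₃‖ / (4 * P * (jb m k₁ * jb m k₃)))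
        * (‖Q η (k₁ + k₃) k₂‖ / (4 * P * (jb m (k₁ + k₃) * jb m k₂))) := by
    rw [q3, q2, q2]
    simp only [norm_mul, norm_div, Complex.norm_real, Real.norm_eq_abs]
    rw [← hP, ← hp, ← hD, abs_of_nonneg hPpos.le, abs_of_nonneg hb13.le, abs_of_nonneg hb1.le,
      abs_of_nonneg hb2.le, abs_of_nonneg hb3.le,
      abs_of_nonneg (by norm_num : (0:ℝ) ≤ (4:ℝ))]
  rw [hnorm]
  have hDpos : 0 < |D| := lt_of_lt_of_le hm hDabs
  have step : (4 * jb m (k₁ + k₃)) / |D| * (‖Q (1 - η) k₁ k₃‖ / (4 * P * (jb m k₁ * jb m k₃)))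
        * (‖Q η (k₁ + k₃) k₂‖ / (4 * P * (jb m (k₁ + k₃) * jb m k₂)))
      ≤ (4 * jb m (k₁ + k₃)) / m * (MQ / (4 * P * (jb m k₁ * jb m k₃)))
        * (MQ / (4 * P * (jb m (k₁ + k₃) * jb m k₂))) := by
    gcongr
    · exact hQ _ _ _
    · exact hQ _ _ _
  refine le_trans step ?_
  have heq : (4 * jb m (k₁ + k₃)) / m * (MQ / (4 * P * (jb m k₁ * jb m k₃)))
        * (MQ / (4 * P * (jb m (k₁ + k₃) * jb m k₂)))
      = MQ ^ 2 / (4 * m * P ^ 2) * (jb m k₁)⁻¹ * (jb m k₂)⁻¹ * (jb m k₃)⁻¹ := by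
    field_simp
  rw [heq]
  have hle : MQ ^ 2 / (4 * m * P ^ 2) ≤ MQ ^ 2 / (4 * m * P ^ 2) + 1 := by linarith
  gcongr
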